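/- Let T be a logic extending IPC. Every NNIL formula A can be decomposed into T-components: there is a finite set Γ_A of T-components with T ⊢ A ↔ ⋁Γ_A, and moreover all atoms of Γ_A occur in A. -/

import Mathlib

inductive Fm : Type
  | bot : Fm
  | atom : ℕ → Fm
  | and : Fm → Fm → Fm
  | or : Fm → Fm → Fm
  | imp : Fm → Fm → Fm
deriving DecidableEq

namespace Fm

def neg (A : Fm) : Fm := A.imp .bot
def top : Fm := Fm.bot.imp .bot
def iff (A B : Fm) : Fm := (A.imp B).and (B.imp A)

def subst (θ : ℕ → Fm) : Fm → Fm
  | bot => bot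
  | atom n => θ n
  | and A B => (A.subst θ).and (B.subst θ)
  | or A B => (A.subst θ).or (B.subst θ)
  | imp A B => (A.subst θ).imp (B.subst θ)

def atoms : Fm → Finset ℕ
  | bot => ∅
  | atom n => {n}
  | and A B => A.atoms ∪ B.atoms
  | or A B => A.atoms ∪ B.atoms
  | imp A B => A.atoms ∪ B.atoms

/-- maximal nesting of implications in the left/overall: `c→`. -/
def cimp : Fm → ℕ
  | bot => 0
  | atom _ => 0
  | and A B => max A.cimp B.cimp
  | or A B => max A.cimp B.cimp
  | imp A B => 1 + max A.cimp B.cimp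

end Fm

def bigAndL (l : List Fm) : Fm := l.foldr Fm.and Fm.top
def bigOrL (l : List Fm) : Fm := l.foldr Fm.or Fm.bot

/-- nonempty disjunction -/
def bigOrNE : Fm → List Fm → Fm
  | A, [] => A
  | A, B :: l => A.or (bigOrNE B l)

/-- Hilbert-style intuitionistic propositional calculus. -/
inductive IPC : Fm → Prop
  | imp_k (A B : Fm) : IPC (A.imp (B.imp A))
  | imp_s (A B C : Fm) : IPC ((A.imp (B.imp C)).imp ((A.imp B).imp (A.imp C)))
  | and_intro (A B : Fm) : IPC (A.imp (B.imp (A.and B)))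
  | and_left (A B : Fm) : IPC ((A.and B).imp A)
  | and_right (A B : Fm) : IPC ((A.and B).imp B)
  | or_inl (A B : Fm) : IPC (A.imp (A.or B))
  | or_inr (A B : Fm) : IPC (B.imp (A.or B))
  | or_elim (A B C : Fm) : IPC ((A.imp C).imp ((B.imp C).imp ((A.or B).imp C)))
  | exfalso (A : Fm) : IPC (Fm.bot.imp A)
  | mp {A B : Fm} : IPC (A.imp B) → IPC A → IPC B

/-- Γ-preservativity in the logic T : `A ⊳_{T,Γ} B`. -/
def Pres (T : Fm → Prop) (Γ : Set Fm) (A B : Fm) : Prop :=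
  ∀ E ∈ Γ, T (E.imp A) → T (E.imp B)

/-- substitutions are identity on the parameters. -/
def IdOnPar (par : Finset ℕ) (θ : ℕ → Fm) : Prop :=
  ∀ p ∈ par, θ p = Fm.atom p

/-- implication-free formulas. -/
inductive NI : Fm → Prop
  | bot : NI .bot
  | atom (n : ℕ) : NI (.atom n)
  | and {A B : Fm} : NI A → NI B → NI (A.and B)
  | or {A B : Fm} : NI A → NI B → NI (A.or B)

/-- No Nested Implications in the Left. -/
inductive NNIL : Fm → Prop
  | bot : NNIL .bot
  | atom (n : ℕ) : NNIL (.atom n)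
  | and {A B : Fm} : NNIL A → NNIL B → NNIL (A.and B)
  | or {A B : Fm} : NNIL A → NNIL B → NNIL (A.or B)
  | imp {A B : Fm} : NI A → NNIL B → NNIL (A.imp B)

def IPCPrime (A : Fm) : Prop :=
  ∀ B C, IPC (A.imp (B.or C)) → IPC (A.imp B) ∨ IPC (A.imp C)

/-- T-components: `⋀Γ ∧ ⋀Δ`, Γ atoms, Δ implications with atomic
antecedents not T-provable from Γ. -/
def IsComponentOver (T : Fm → Prop) (B : Fm) : Prop :=
  ∃ (as : List ℕ) (imps : List (ℕ × Fm)),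
    B = (bigAndL (as.map Fm.atom)).and
          (bigAndL (imps.map fun p => (Fm.atom p.1).imp p.2)) ∧
    ∀ p ∈ imps, ¬ T ((bigAndL (as.map Fm.atom)).imp (Fm.atom p.1))


/-!
Work with conjunctions `⋀Γ ∧ ⋀Φ` of atoms `Γ` and NNIL formulas `Φ`. As long as some member of
`Φ` is not an implication `q → B` with `T ⊬ ⋀Γ → q`, rewrite it up to `T`-equivalence: split a
conjunction, move an atom into `Γ`, distribute a disjunction (giving two conjunctions of this kind),
drop `⊥ → B`, replace `(C₁ ∧ C₂) → B` by `C₁ → C₂ → B`, `(C₁ ∨ C₂) → B` by `C₁ → B` and `C₂ → B`,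
and `q → B` by `B` once `T ⊢ ⋀Γ → q`. None of these steps introduces atoms, and all of them
lower the total weight of `Φ`, where an implication `C → B` weighs `κ C * (weight B + 1)` for an
antecedent measure `κ` chosen so that currying and splitting a disjunctive antecedent pay off.
When no step applies, the conjunction is a `T`-component.
-/

structure ExtendsIPC (T : Fm → Prop) : Prop where
  of_ipc : ∀ {A : Fm}, IPC A → T A
  mp : ∀ {A B : Fm}, T (A.imp B) → T A → T B

@[simp] theorem bigAndL_nil : bigAndL [] = Fm.top := rfl

@[simp] theorem bigAndL_cons (A : Fm) (l : List Fm) : bigAndL (A :: l) = A.and (bigAndL l) := rfl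

@[simp] theorem bigOrL_nil : bigOrL [] = Fm.bot := rfl

namespace IPC

theorem imp_refl (A : Fm) : IPC (A.imp A) :=
  mp (mp (imp_s A (A.imp A) A) (imp_k A (A.imp A))) (imp_k A A)

theorem top : IPC Fm.top := imp_refl .bot

theorem imp_trans {A B C : Fm} (h₁ : IPC (A.imp B)) (h₂ : IPC (B.imp C)) : IPC (A.imp C) :=
  mp (mp (imp_s A B C) (mp (imp_k (B.imp C) A) h₂)) h₁

theorem imp_comm {A B C : Fm} (h : IPC (A.imp (B.imp C))) : IPC (B.imp (A.imp C)) :=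
  imp_trans (imp_k B A) (mp (imp_s A B C) h)

theorem bigAndL_imp_of_mem {A : Fm} {l : List Fm} (h : A ∈ l) : IPC ((bigAndL l).imp A) := by
  induction l with
  | nil => simp at h
  | cons B l ih =>
    rcases List.mem_cons.1 h with rfl | h
    · exact and_left _ _
    · exact imp_trans (and_right _ _) (ih h)

end IPC

def Der (Γ : List Fm) (A : Fm) : Prop := IPC ((bigAndL Γ).imp A)

namespace Der

variable {Γ Δ : List Fm} {A B C : Fm}

theorem of_ipc (h : IPC A) : Der Γ A := IPC.mp (IPC.imp_k A _) h

theorem mp (h₁ : Der Γ (A.imp B)) (h₂ : Der Γ A) : Der Γ B :=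
  IPC.mp (IPC.mp (IPC.imp_s _ A B) h₁) h₂

theorem ax (h : A ∈ Γ) : Der Γ A := IPC.bigAndL_imp_of_mem h

theorem head : Der (A :: Γ) A := ax List.mem_cons_self

theorem intro (h : Der (A :: Γ) B) : Der Γ (A.imp B) :=
  IPC.imp_comm <| IPC.imp_trans (IPC.and_intro A (bigAndL Γ))
    (IPC.mp (IPC.imp_s _ _ B) (IPC.mp (IPC.imp_k _ _) h))

theorem to_ipc (h : Der [] A) : IPC A := IPC.mp h IPC.top

theorem and_intro (h₁ : Der Γ A) (h₂ : Der Γ B) : Der Γ (A.and B) :=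
  mp (mp (of_ipc (IPC.and_intro A B)) h₁) h₂

theorem and_left (h : Der Γ (A.and B)) : Der Γ A := mp (of_ipc (IPC.and_left A B)) h

theorem and_right (h : Der Γ (A.and B)) : Der Γ B := mp (of_ipc (IPC.and_right A B)) h

theorem and_iff : Der Γ (A.and B) ↔ Der Γ A ∧ Der Γ B :=
  ⟨fun h => ⟨h.and_left, h.and_right⟩, fun h => h.1.and_intro h.2⟩

theorem or_inl (h : Der Γ A) : Der Γ (A.or B) := mp (of_ipc (IPC.or_inl A B)) h

theorem or_inr (h : Der Γ B) : Der Γ (A.or B) := mp (of_ipc (IPC.or_inr A B)) h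

theorem or_elim (h : Der Γ (A.or B)) (h₁ : Der (A :: Γ) C) (h₂ : Der (B :: Γ) C) : Der Γ C :=
  mp (mp (mp (of_ipc (IPC.or_elim A B C)) (intro h₁)) (intro h₂)) h

theorem exfalso (h : Der Γ .bot) : Der Γ A := mp (of_ipc (IPC.exfalso A)) h

theorem iff_intro (h₁ : Der (A :: Γ) B) (h₂ : Der (B :: Γ) A) : Der Γ (A.iff B) :=
  and_intro (intro h₁) (intro h₂)

theorem iff_mp (h : Der Γ (A.iff B)) (hA : Der Γ A) : Der Γ B := mp (and_left h) hA

theorem iff_mpr (h : Der Γ (A.iff B)) (hB : Der Γ B) : Der Γ A := mp (and_right h) hB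

theorem bigAndL_iff {l : List Fm} : Der Γ (bigAndL l) ↔ ∀ B ∈ l, Der Γ B := by
  induction l with
  | nil => simpa using of_ipc IPC.top
  | cons B l ih => simp [and_iff, ih]

theorem weaken (h : Der Γ A) (hΓ : Γ ⊆ Δ) : Der Δ A :=
  mp (of_ipc h) (bigAndL_iff.2 fun _ hB => ax (hΓ hB))

theorem weaken_cons (h : Der Γ A) : Der (B :: Γ) A := h.weaken (List.subset_cons_self _ _)

theorem iff_trans (h₁ : Der Γ (A.iff B)) (h₂ : Der Γ (B.iff C)) : Der Γ (A.iff C) :=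
  iff_intro (h₂.weaken_cons.iff_mp (h₁.weaken_cons.iff_mp head))
    (h₁.weaken_cons.iff_mpr (h₂.weaken_cons.iff_mpr head))

theorem bigOrL_intro {l : List Fm} (hB : B ∈ l) (h : Der Γ B) : Der Γ (bigOrL l) := by
  induction l with
  | nil => simp at hB
  | cons C l ih =>
    rcases List.mem_cons.1 hB with rfl | hB
    · exact h.or_inl
    · exact (ih hB).or_inr

theorem bigOrL_elim {l : List Fm} (h : Der Γ (bigOrL l)) (hl : ∀ B ∈ l, Der (B :: Γ) C) :
    Der Γ C := by
  induction l generalizing Γ with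
  | nil => exact h.exfalso
  | cons B l ih =>
    refine h.or_elim (hl B List.mem_cons_self) (ih head fun B' hB' => ?_)
    exact (hl B' (List.mem_cons_of_mem _ hB')).weaken (List.cons_subset_cons _ (by simp))

end Der

theorem IPC.iff_of_der {A B : Fm} (h₁ : Der [A] B) (h₂ : Der [B] A) : IPC (A.iff B) :=
  Der.to_ipc (.iff_intro h₁ h₂)

theorem ExtendsIPC.of_der {T : Fm → Prop} (hT : ExtendsIPC T) {Γ : List Fm} {A : Fm}
    (h : Der Γ A) (hΓ : ∀ B ∈ Γ, T B) : T A := by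
  induction Γ generalizing A with
  | nil => exact hT.of_ipc h.to_ipc
  | cons B Γ ih => exact hT.mp (ih h.intro fun C hC => hΓ C (by simp [hC])) (hΓ B (by simp))

theorem ExtendsIPC.of_der_singleton {T : Fm → Prop} (hT : ExtendsIPC T) {A B : Fm}
    (h : Der [A] B) (hA : T A) : T B :=
  hT.of_der h (by simpa using hA)

def preComponent (Γ : List ℕ) (Φ : List Fm) : Fm := (bigAndL (Γ.map Fm.atom)).and (bigAndL Φ)

def IsComponentImp (T : Fm → Prop) (Γ : List ℕ) (φ : Fm) : Prop :=
  ∃ q B, φ = (Fm.atom q).imp B ∧ ¬ T ((bigAndL (Γ.map Fm.atom)).imp (.atom q))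

theorem isComponentOver_preComponent {T : Fm → Prop} {Γ : List ℕ} {Φ : List Fm}
    (h : ∀ φ ∈ Φ, IsComponentImp T Γ φ) : IsComponentOver T (preComponent Γ Φ) := by
  suffices ∃ imps : List (ℕ × Fm), Φ = imps.map (fun p => (Fm.atom p.1).imp p.2) ∧
      ∀ p ∈ imps, ¬ T ((bigAndL (Γ.map Fm.atom)).imp (.atom p.1)) by
    obtain ⟨imps, rfl, himps⟩ := this
    exact ⟨Γ, imps, rfl, himps⟩
  induction Φ with
  | nil => exact ⟨[], rfl, by simp⟩
  | cons φ Φ ih =>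
    obtain ⟨q, B, rfl, hq⟩ := h φ List.mem_cons_self
    obtain ⟨imps, rfl, himps⟩ := ih fun ψ hψ => h ψ (List.mem_cons_of_mem _ hψ)
    exact ⟨(q, B) :: imps, rfl, List.forall_mem_cons.2 ⟨hq, himps⟩⟩

theorem atoms_bigAndL_subset {S : Finset ℕ} {l : List Fm} (h : ∀ φ ∈ l, φ.atoms ⊆ S) :
    (bigAndL l).atoms ⊆ S := by
  induction l with
  | nil => simp [Fm.top, Fm.atoms]
  | cons φ l ih => simpa [Fm.atoms, Finset.union_subset_iff] using ⟨h φ (by simp), ih (by simp_all)⟩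

theorem atoms_preComponent_subset {S : Finset ℕ} {Γ : List ℕ} {Φ : List Fm}
    (hΓ : ∀ a ∈ Γ, a ∈ S) (hΦ : ∀ φ ∈ Φ, φ.atoms ⊆ S) : (preComponent Γ Φ).atoms ⊆ S :=
  Finset.union_subset (atoms_bigAndL_subset (by simpa [Fm.atoms] using hΓ))
    (atoms_bigAndL_subset hΦ)

namespace Der

variable {Δ : List Fm} {Γ : List ℕ} {Φ : List Fm}

theorem bigAndL_atoms (h : ∀ a ∈ Γ, Der Δ (.atom a)) : Der Δ (bigAndL (Γ.map Fm.atom)) :=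
  bigAndL_iff.2 (List.forall_mem_map.2 h)

theorem preComponent_iff :
    Der Δ (preComponent Γ Φ) ↔ (∀ a ∈ Γ, Der Δ (.atom a)) ∧ ∀ φ ∈ Φ, Der Δ φ := by
  simp [preComponent, and_iff, bigAndL_iff]

theorem of_preComponent_hyp {A : Fm}
    (h : (∀ a ∈ Γ, Der (preComponent Γ Φ :: Δ) (.atom a)) →
      (∀ φ ∈ Φ, Der (preComponent Γ Φ :: Δ) φ) → Der (preComponent Γ Φ :: Δ) A) :
    Der (preComponent Γ Φ :: Δ) A :=
  h (preComponent_iff.1 head).1 (preComponent_iff.1 head).2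

end Der

namespace IPC

variable {Γ : List ℕ} {Φ Ψ : List Fm}

theorem preComponent_iff_of_perm (h : Φ.Perm Ψ) :
    IPC ((preComponent Γ Φ).iff (preComponent Γ Ψ)) := by
  have key : ∀ {Φ Ψ : List Fm}, Φ.Perm Ψ → Der [preComponent Γ Φ] (preComponent Γ Ψ) :=
    fun h => Der.of_preComponent_hyp fun hΓ hΦ =>
      Der.preComponent_iff.2 ⟨hΓ, fun φ hφ => hΦ φ (h.mem_iff.2 hφ)⟩
  exact iff_of_der (key h) (key h.symm)

theorem preComponent_bot_cons : IPC ((preComponent Γ (.bot :: Φ)).iff .bot) :=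
  iff_of_der (Der.of_preComponent_hyp fun _ hΦ => (hΦ _ List.mem_cons_self).exfalso)
    (Der.exfalso .head)

theorem preComponent_atom_cons (a : ℕ) :
    IPC ((preComponent Γ (.atom a :: Φ)).iff (preComponent (a :: Γ) Φ)) := by
  refine iff_of_der (Der.of_preComponent_hyp fun hΓ hΦ => ?_)
    (Der.of_preComponent_hyp fun hΓ hΦ => ?_) <;>
    simp only [List.forall_mem_cons] at hΓ hΦ <;> refine Der.preComponent_iff.2 ?_ <;>
    simp only [List.forall_mem_cons] <;> tauto

theorem preComponent_or_cons (A B : Fm) :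
    IPC ((preComponent Γ (A.or B :: Φ)).iff
      ((preComponent Γ (A :: Φ)).or (preComponent Γ (B :: Φ)))) := by
  refine iff_of_der (Der.of_preComponent_hyp fun hΓ hΦ => ?_)
    (Der.head.or_elim (Der.of_preComponent_hyp fun hΓ hΦ => ?_)
      (Der.of_preComponent_hyp fun hΓ hΦ => ?_)) <;>
    simp only [List.forall_mem_cons] at hΦ
  · refine hΦ.1.or_elim (.or_inl ?_) (.or_inr ?_) <;>
      exact Der.preComponent_iff.2 ⟨fun a ha => (hΓ a ha).weaken_cons,
        List.forall_mem_cons.2 ⟨.head, fun φ hφ => (hΦ.2 φ hφ).weaken_cons⟩⟩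
  · exact Der.preComponent_iff.2 ⟨hΓ, List.forall_mem_cons.2 ⟨hΦ.1.or_inl, hΦ.2⟩⟩
  · exact Der.preComponent_iff.2 ⟨hΓ, List.forall_mem_cons.2 ⟨hΦ.1.or_inr, hΦ.2⟩⟩

theorem and_iff_bigAndL (A B : Fm) : IPC ((A.and B).iff (bigAndL [A, B])) :=
  iff_of_der (Der.head.and_left.and_intro (Der.head.and_right.and_intro (.of_ipc top)))
    (Der.head.and_left.and_intro Der.head.and_right.and_left)

theorem bot_imp_iff_bigAndL_nil (B : Fm) : IPC ((Fm.bot.imp B).iff (bigAndL [])) :=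
  iff_of_der (.of_ipc top) (.of_ipc (exfalso B))

theorem and_imp_iff_bigAndL (C₁ C₂ B : Fm) :
    IPC (((C₁.and C₂).imp B).iff (bigAndL [C₁.imp (C₂.imp B)])) := by
  refine iff_of_der ?_ ?_
  · have h : Der [C₂, C₁, (C₁.and C₂).imp B] ((C₁.and C₂).imp B) := .ax (by simp)
    have hC : Der [C₂, C₁, (C₁.and C₂).imp B] (C₁.and C₂) := .and_intro (.ax (by simp)) .head
    exact .and_intro (.intro <| .intro <| h.mp hC) (.of_ipc top)
  · have h : Der [C₁.and C₂, bigAndL [C₁.imp (C₂.imp B)]] (C₁.imp (C₂.imp B)) :=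
      Der.head.weaken_cons.and_left
    exact .intro <| (h.mp Der.head.and_left).mp Der.head.and_right

theorem or_imp_iff_bigAndL (C₁ C₂ B : Fm) :
    IPC (((C₁.or C₂).imp B).iff (bigAndL [C₁.imp B, C₂.imp B])) := by
  refine iff_of_der ?_ ?_
  · have h : ∀ C, Der [C, (C₁.or C₂).imp B] ((C₁.or C₂).imp B) := fun _ => Der.head.weaken_cons
    exact .and_intro (.intro <| (h C₁).mp Der.head.or_inl)
      (.and_intro (.intro <| (h C₂).mp Der.head.or_inr) (.of_ipc top))
  · have h : Der [C₁.or C₂, bigAndL [C₁.imp B, C₂.imp B]] (bigAndL [C₁.imp B, C₂.imp B]) :=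
      Der.head.weaken_cons
    exact .intro <| Der.head.or_elim (h.and_left.weaken_cons.mp .head)
      (h.and_right.and_left.weaken_cons.mp .head)

end IPC

namespace Fm

/-- Only the values on implication-free formulas matter: these are the antecedents in NNIL
formulas. -/
def anteWeight : Fm → ℕ
  | bot => 1
  | atom _ => 1
  | and A B => A.anteWeight * (B.anteWeight + 1)
  | or A B => A.anteWeight + B.anteWeight + 1
  | imp _ _ => 1

def weight : Fm → ℕ
  | bot => 1
  | atom _ => 1
  | and A B => A.weight + B.weight + 1
  | or A B => A.weight + B.weight + 1
  | imp C B => C.anteWeight * (B.weight + 1)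

theorem one_le_anteWeight (A : Fm) : 1 ≤ A.anteWeight := by
  induction A with
  | and A B ihA _ => simp only [anteWeight]; nlinarith
  | or => simp only [anteWeight]; omega
  | _ => simp [anteWeight]

theorem one_le_weight (A : Fm) : 1 ≤ A.weight := by
  cases A with
  | imp C B => simp only [weight]; nlinarith [C.one_le_anteWeight]
  | _ => simp [weight]

theorem weight_curry_lt (C₁ C₂ B : Fm) :
    (C₁.imp (C₂.imp B)).weight < ((C₁.and C₂).imp B).weight := by
  simp only [weight, anteWeight]
  nlinarith [C₁.one_le_anteWeight, C₂.one_le_anteWeight, B.one_le_weight]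

theorem weight_add_weight_lt (C₁ C₂ B : Fm) :
    (C₁.imp B).weight + (C₂.imp B).weight < ((C₁.or C₂).imp B).weight := by
  simp only [weight, anteWeight]
  nlinarith [B.one_le_weight]

end Fm

def listWeight (Φ : List Fm) : ℕ := (Φ.map Fm.weight).sum

@[simp] theorem listWeight_cons (φ : Fm) (Φ : List Fm) :
    listWeight (φ :: Φ) = φ.weight + listWeight Φ := by
  simp [listWeight]

def HasDecomposition (T : Fm → Prop) (S : Finset ℕ) (X : Fm) : Prop :=
  ∃ l : List Fm, (∀ B ∈ l, IsComponentOver T B ∧ B.atoms ⊆ S) ∧ T (X.iff (bigOrL l))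

namespace HasDecomposition

variable {T : Fm → Prop} {S : Finset ℕ} {X Y : Fm} {Γ : List ℕ} {φ : Fm} {Φ Ψ : List Fm}

theorem bot (hT : ExtendsIPC T) : HasDecomposition T S .bot :=
  ⟨[], by simp, hT.of_ipc (IPC.iff_of_der .head .head)⟩

theorem of_isComponentOver (hT : ExtendsIPC T) (hX : IsComponentOver T X) (hS : X.atoms ⊆ S) :
    HasDecomposition T S X :=
  ⟨[X], by simp [hX, hS], hT.of_ipc <|
    IPC.iff_of_der (.bigOrL_intro (List.mem_singleton_self X) .head)
      (Der.head.bigOrL_elim (l := [X]) fun _ hB => List.mem_singleton.1 hB ▸ .head)⟩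

theorem of_iff (hT : ExtendsIPC T) (h : T (X.iff Y)) (hY : HasDecomposition T S Y) :
    HasDecomposition T S X :=
  let ⟨l, hl, hYl⟩ := hY
  ⟨l, hl, hT.of_der (Γ := [X.iff Y, Y.iff (bigOrL l)]) (Der.head.iff_trans Der.head.weaken_cons)
    (by simp [h, hYl])⟩

theorem or (hT : ExtendsIPC T) (hX : HasDecomposition T S X) (hY : HasDecomposition T S Y) :
    HasDecomposition T S (X.or Y) := by
  obtain ⟨l₁, hl₁, hXl₁⟩ := hX
  obtain ⟨l₂, hl₂, hYl₂⟩ := hY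
  refine ⟨l₁ ++ l₂, fun B hB => (List.mem_append.1 hB).elim (hl₁ B) (hl₂ B),
    hT.of_der (Γ := [X.iff (bigOrL l₁), Y.iff (bigOrL l₂)]) ?_ (by simp [hXl₁, hYl₂])⟩
  have hX₁ : Der [X.iff (bigOrL l₁), Y.iff (bigOrL l₂)] (X.iff (bigOrL l₁)) := .head
  have hY₂ : Der [X.iff (bigOrL l₁), Y.iff (bigOrL l₂)] (Y.iff (bigOrL l₂)) := Der.head.weaken_cons
  refine Der.iff_intro (Der.head.or_elim ?_ ?_) (Der.head.bigOrL_elim fun B hB => ?_)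
  · exact (hX₁.weaken_cons.weaken_cons.iff_mp .head).bigOrL_elim fun _ hB =>
      .bigOrL_intro (List.mem_append_left _ hB) .head
  · exact (hY₂.weaken_cons.weaken_cons.iff_mp .head).bigOrL_elim fun _ hB =>
      .bigOrL_intro (List.mem_append_right _ hB) .head
  · rcases List.mem_append.1 hB with hB | hB
    · exact .or_inl <| hX₁.weaken_cons.weaken_cons.iff_mpr (.bigOrL_intro hB .head)
    · exact .or_inr <| hY₂.weaken_cons.weaken_cons.iff_mpr (.bigOrL_intro hB .head)

theorem preComponent_cons_of_imp_iff (hT : ExtendsIPC T)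
    (h : T ((bigAndL (Γ.map Fm.atom)).imp (φ.iff (bigAndL Ψ))))
    (hΨ : HasDecomposition T S (preComponent Γ (Ψ ++ Φ))) :
    HasDecomposition T S (preComponent Γ (φ :: Φ)) := by
  refine hΨ.of_iff hT (hT.of_der_singleton (Der.iff_intro ?_ ?_) h) <;>
    refine Der.of_preComponent_hyp fun hΓ hΦ => Der.preComponent_iff.2 ⟨hΓ, ?_⟩ <;>
    have hφΨ : Der _ (φ.iff (bigAndL Ψ)) := Der.head.weaken_cons.mp (Der.bigAndL_atoms hΓ) <;>
    simp only [List.forall_mem_cons, List.forall_mem_append] at hΦ ⊢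
  · exact ⟨Der.bigAndL_iff.1 (hφΨ.iff_mp hΦ.1), hΦ.2⟩
  · exact ⟨hφΨ.iff_mpr (Der.bigAndL_iff.2 hΦ.1), hΦ.2⟩

theorem preComponent_cons_of_ipc_iff (hT : ExtendsIPC T) (h : IPC (φ.iff (bigAndL Ψ)))
    (hΨ : HasDecomposition T S (preComponent Γ (Ψ ++ Φ))) :
    HasDecomposition T S (preComponent Γ (φ :: Φ)) :=
  preComponent_cons_of_imp_iff hT (hT.of_ipc (IPC.mp (IPC.imp_k _ _) h)) hΨ

theorem preComponent_atom_imp_cons (hT : ExtendsIPC T) {q : ℕ} {B : Fm}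
    (hq : T ((bigAndL (Γ.map Fm.atom)).imp (.atom q)))
    (hB : HasDecomposition T S (preComponent Γ (B :: Φ))) :
    HasDecomposition T S (preComponent Γ ((Fm.atom q).imp B :: Φ)) := by
  refine preComponent_cons_of_imp_iff (Ψ := [B]) hT (hT.of_der_singleton ?_ hq) hB
  refine Der.intro (Der.iff_intro ?_ ?_)
  · have hq : Der [(Fm.atom q).imp B, bigAndL (Γ.map Fm.atom),
        (bigAndL (Γ.map Fm.atom)).imp (.atom q)] (.atom q) :=
      Der.head.weaken_cons.weaken_cons.mp Der.head.weaken_cons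
    exact Der.bigAndL_iff.2 (List.forall_mem_singleton.2 (Der.head.mp hq))
  · exact Der.intro Der.head.weaken_cons.and_left

theorem preComponent_imp_cons (hT : ExtendsIPC T) {Γ : List ℕ} {C B : Fm} {Φ : List Fm}
    (hΓ : ∀ a ∈ Γ, a ∈ S) (hC : NI C) (hB : NNIL B) (hCB : (C.imp B).atoms ⊆ S)
    (hΦ : ∀ ψ ∈ Φ, NNIL ψ ∧ ψ.atoms ⊆ S) (hCBc : ¬ IsComponentImp T Γ (C.imp B))
    (ih : ∀ Γ' Ψ, listWeight Ψ < listWeight (C.imp B :: Φ) → (∀ a ∈ Γ', a ∈ S) →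
      (∀ ψ ∈ Ψ, NNIL ψ ∧ ψ.atoms ⊆ S) → HasDecomposition T S (preComponent Γ' Ψ)) :
    HasDecomposition T S (preComponent Γ (C.imp B :: Φ)) := by
  simp only [Fm.atoms, Finset.union_subset_iff] at hCB
  cases hC with
  | bot =>
    refine preComponent_cons_of_ipc_iff hT (IPC.bot_imp_iff_bigAndL_nil B) (ih _ _ ?_ hΓ hΦ)
    simp [Fm.weight, Fm.anteWeight]
  | atom q =>
    have hq : T ((bigAndL (Γ.map Fm.atom)).imp (.atom q)) := by
      by_contra h
      exact hCBc ⟨q, B, rfl, h⟩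
    refine preComponent_atom_imp_cons hT hq (ih _ _ ?_ hΓ ?_)
    · simp [Fm.weight, Fm.anteWeight]
    · exact List.forall_mem_cons.2 ⟨⟨hB, hCB.2⟩, hΦ⟩
  | @and C₁ C₂ hC₁ hC₂ =>
    simp only [Fm.atoms, Finset.union_subset_iff] at hCB
    refine preComponent_cons_of_ipc_iff hT (IPC.and_imp_iff_bigAndL C₁ C₂ B) (ih _ _ ?_ hΓ ?_)
    · simpa using C₁.weight_curry_lt C₂ B
    · exact List.forall_mem_cons.2 ⟨⟨.imp hC₁ (.imp hC₂ hB),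
      Finset.union_subset hCB.1.1 (Finset.union_subset hCB.1.2 hCB.2)⟩, hΦ⟩
  | @or C₁ C₂ hC₁ hC₂ =>
    simp only [Fm.atoms, Finset.union_subset_iff] at hCB
    refine preComponent_cons_of_ipc_iff hT (IPC.or_imp_iff_bigAndL C₁ C₂ B) (ih _ _ ?_ hΓ ?_)
    · have := C₁.weight_add_weight_lt C₂ B
      simp only [List.cons_append, List.nil_append, listWeight_cons]
      omega
    · exact List.forall_mem_cons.2 ⟨⟨.imp hC₁ hB, Finset.union_subset hCB.1.1 hCB.2⟩,
        List.forall_mem_cons.2 ⟨⟨.imp hC₂ hB, Finset.union_subset hCB.1.2 hCB.2⟩, hΦ⟩⟩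

theorem preComponent_cons (hT : ExtendsIPC T) {Γ : List ℕ} {φ : Fm} {Φ : List Fm}
    (hΓ : ∀ a ∈ Γ, a ∈ S) (hφ : NNIL φ) (hφS : φ.atoms ⊆ S)
    (hΦ : ∀ ψ ∈ Φ, NNIL ψ ∧ ψ.atoms ⊆ S) (hφc : ¬ IsComponentImp T Γ φ)
    (ih : ∀ Γ' Ψ, listWeight Ψ < listWeight (φ :: Φ) → (∀ a ∈ Γ', a ∈ S) →
      (∀ ψ ∈ Ψ, NNIL ψ ∧ ψ.atoms ⊆ S) → HasDecomposition T S (preComponent Γ' Ψ)) :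
    HasDecomposition T S (preComponent Γ (φ :: Φ)) := by
  cases hφ with
  | bot => exact of_iff hT (hT.of_ipc IPC.preComponent_bot_cons) (bot hT)
  | atom a =>
    refine of_iff hT (hT.of_ipc (IPC.preComponent_atom_cons a)) (ih _ _ ?_ ?_ hΦ)
    · simp [Fm.weight]
    · exact List.forall_mem_cons.2 ⟨by simpa [Fm.atoms] using hφS, hΓ⟩
  | @and A B hA hB =>
    simp only [Fm.atoms, Finset.union_subset_iff] at hφS
    refine preComponent_cons_of_ipc_iff hT (IPC.and_iff_bigAndL A B) (ih _ _ ?_ hΓ ?_)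
    · simp [Fm.weight]; omega
    · exact List.forall_mem_cons.2 ⟨⟨hA, hφS.1⟩, List.forall_mem_cons.2 ⟨⟨hB, hφS.2⟩, hΦ⟩⟩
  | @or A B hA hB =>
    simp only [Fm.atoms, Finset.union_subset_iff] at hφS
    refine of_iff hT (hT.of_ipc (IPC.preComponent_or_cons A B))
      (.or hT (ih _ _ ?_ hΓ (List.forall_mem_cons.2 ⟨⟨hA, hφS.1⟩, hΦ⟩))
        (ih _ _ ?_ hΓ (List.forall_mem_cons.2 ⟨⟨hB, hφS.2⟩, hΦ⟩))) <;>
    simp [Fm.weight]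
  | imp hC hB => exact preComponent_imp_cons hT hΓ hC hB hφS hΦ hφc ih

end HasDecomposition

theorem hasDecomposition_preComponent {T : Fm → Prop} (hT : ExtendsIPC T) {S : Finset ℕ}
    (Γ : List ℕ) (Φ : List Fm) (hΓ : ∀ a ∈ Γ, a ∈ S) (hΦ : ∀ φ ∈ Φ, NNIL φ ∧ φ.atoms ⊆ S) :
    HasDecomposition T S (preComponent Γ Φ) := by
  induction hn : listWeight Φ using Nat.strong_induction_on generalizing Γ Φ with
  | _ n ih =>
  by_cases hdone : ∀ φ ∈ Φ, IsComponentImp T Γ φ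
  · exact .of_isComponentOver hT (isComponentOver_preComponent hdone)
      (atoms_preComponent_subset hΓ fun φ hφ => (hΦ φ hφ).2)
  obtain ⟨φ, hφ, hφc⟩ := not_forall₂.1 hdone
  have hperm := List.perm_cons_erase hφ
  have hweight : listWeight (φ :: Φ.erase φ) = n := by
    rw [← hn, listWeight, listWeight, (hperm.map _).sum_eq]
  refine .of_iff hT (hT.of_ipc (IPC.preComponent_iff_of_perm hperm)) ?_
  refine .preComponent_cons hT hΓ (hΦ φ hφ).1 (hΦ φ hφ).2
    (fun ψ hψ => hΦ ψ (List.mem_of_mem_erase hψ)) hφc fun Γ' Ψ hΨ hΓ' hΨS => ?_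
  exact ih _ (hweight ▸ hΨ) Γ' Ψ hΓ' hΨS rfl

theorem IPC.iff_preComponent_singleton (A : Fm) : IPC (A.iff (preComponent [] [A])) :=
  iff_of_der (Der.preComponent_iff.2 ⟨by simp, by simpa using Der.head⟩)
    (Der.of_preComponent_hyp fun _ hΦ => hΦ A List.mem_cons_self)

theorem stmt_15 (T : Fm → Prop) (hext : ∀ A, IPC A → T A)
    (hmp : ∀ A B, T (A.imp B) → T A → T B) (A : Fm) (hA : NNIL A) :
    ∃ l : List Fm, (∀ B ∈ l, IsComponentOver T B ∧ B.atoms ⊆ A.atoms) ∧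
      T (A.iff (bigOrL l)) := by
  have hT : ExtendsIPC T := ⟨hext _, hmp _ _⟩
  exact HasDecomposition.of_iff hT (hT.of_ipc (IPC.iff_preComponent_singleton A))
    (hasDecomposition_preComponent hT [] [A] (by simp) (by simpa using hA))
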